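/- For z in the open unit disk, Li₂(z) + Li₂(1-z) is well-defined when also 1-z is in the domain ℂ\[1,∞), and d/dz [Li₂(z) + Li₂(1-z) + log(z)log(1-z)] = 0 on the intersection of domains with z ∈ ℂ \ ((-∞,0] ∪ [1,∞)); hence Li₂(z) + Li₂(1-z) + log(z)log(1-z) = π²/6 there. -/

import Mathlib

/-!
The function `F(z) = Li₂ z + Li₂ (1 - z) + log z · log (1 - z)` is holomorphic on
`ℂ \ ((-∞, 0] ∪ [1, ∞))`, a set that is star-shaped about `1/2`. On the disk `|z - 1/2| < 1/2`
both `z` and `1 - z` lie in the unit disk, where differentiating the series termwise gives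
`Li₂' z = -log (1 - z) / z`; the four terms of `F'` cancel there, so `F` is constant near `1/2`,
hence everywhere by the identity theorem. The constant is the limit along `x → 0⁺`:
`Li₂ x → 0`, `Li₂ (1 - x) → ζ(2) = π²/6` because the series converges uniformly on the closed
unit disk, and `log x · log (1 - x) = O(x log x) → 0`.
-/

open Complex Filter Topology Metric Set Asymptotics

noncomputable def dilogSeries (z : ℂ) : ℂ := ∑' n : ℕ, z ^ (n + 1) / ((n : ℂ) + 1) ^ 2

lemma norm_pow_div_natCast_add_one_pow (z : ℂ) (m n k : ℕ) :
    ‖z ^ m / ((n : ℂ) + 1) ^ k‖ = ‖z‖ ^ m / ((n : ℝ) + 1) ^ k := by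
  rw [norm_div, norm_pow, norm_pow, ← Nat.cast_add_one, Complex.norm_natCast, Nat.cast_add_one]

lemma hasDerivAt_dilogSeries {z : ℂ} (hz : ‖z‖ < 1) (h0 : z ≠ 0) :
    HasDerivAt dilogSeries (-log (1 - z) / z) z := by
  obtain ⟨r, hzr, hr1⟩ := exists_between hz
  have hr0 : 0 ≤ r := (norm_nonneg z).trans hzr.le
  refine (hasDerivAt_tsum_of_isPreconnected (t := ball 0 r)
    (g := fun (n : ℕ) (w : ℂ) => w ^ (n + 1) / ((n : ℂ) + 1) ^ 2)
    (g' := fun n w => w ^ n / ((n : ℂ) + 1))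
    (summable_geometric_of_lt_one hr0 hr1) isOpen_ball (convex_ball _ _).isPreconnected
    (fun n w _ => ?_) (fun n w hw => ?_) (mem_ball_self ((norm_nonneg z).trans_lt hzr))
    (by simp) (mem_ball_zero_iff.2 hzr)).congr_deriv ?_
  · refine ((hasDerivAt_pow (n + 1) w).div_const _).congr_deriv ?_
    rw [Nat.add_sub_cancel, Nat.cast_add_one]
    field_simp
  · have hn : (1 : ℝ) ≤ (n : ℝ) + 1 := by simp
    calc ‖w ^ n / ((n : ℂ) + 1)‖ = ‖w‖ ^ n / ((n : ℝ) + 1) := by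
          simpa using norm_pow_div_natCast_add_one_pow w n n 1
      _ ≤ r ^ n := (div_le_self (by positivity) hn).trans
          (pow_le_pow_left₀ (norm_nonneg w) (mem_ball_zero_iff.1 hw).le n)
  · refine ((hasSum_taylorSeries_neg_log' hz).div_const z).tsum_eq.symm.trans
      (tsum_congr fun n => ?_) |>.symm
    rw [pow_succ, mul_div_right_comm, mul_div_cancel_right₀ _ h0]

lemma continuousOn_dilogSeries : ContinuousOn dilogSeries (closedBall 0 1) := by
  refine continuousOn_tsum (fun n => ((continuous_pow _).div_const _).continuousOn)
    ((summable_nat_add_iff 1).2 (Real.summable_one_div_nat_pow.2 one_lt_two)) fun n w hw => ?_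
  rw [norm_pow_div_natCast_add_one_pow, Nat.cast_add_one, one_div, div_eq_mul_inv]
  exact mul_le_of_le_one_left (by positivity)
    (pow_le_one₀ (norm_nonneg w) (mem_closedBall_zero_iff.1 hw))

lemma dilogSeries_zero : dilogSeries 0 = 0 := by simp [dilogSeries]

lemma dilogSeries_one : dilogSeries 1 = (Real.pi : ℂ) ^ 2 / 6 := by
  rw [← riemannZeta_two, zeta_eq_tsum_one_div_nat_add_one_cpow (by norm_num), dilogSeries]
  simp

lemma tendsto_dilogSeries_add_dilogSeries_one_sub :
    Tendsto (fun x : ℝ => dilogSeries x + dilogSeries (1 - x)) (𝓝[>] 0)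
      (𝓝 ((Real.pi : ℂ) ^ 2 / 6)) := by
  have hx : Tendsto (fun x : ℝ => (x : ℂ)) (𝓝[>] 0) (𝓝 0) :=
    (continuous_ofReal.tendsto' 0 0 ofReal_zero).mono_left nhdsWithin_le_nhds
  have h0 : Tendsto (fun x : ℝ => dilogSeries x) (𝓝[>] 0) (𝓝 0) := by
    rw [← dilogSeries_zero]
    exact (continuousOn_dilogSeries.continuousAt (closedBall_mem_nhds 0 one_pos)).tendsto.comp hx
  have h1 : Tendsto (fun x : ℝ => dilogSeries (1 - x)) (𝓝[>] 0) (𝓝 ((Real.pi : ℂ) ^ 2 / 6)) := by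
    rw [← dilogSeries_one]
    refine (continuousOn_dilogSeries 1 (by simp)).tendsto.comp (tendsto_nhdsWithin_iff.2 ⟨?_, ?_⟩)
    · simpa using (tendsto_const_nhds (x := (1 : ℂ))).sub hx
    · filter_upwards [Ioo_mem_nhdsGT (zero_lt_one' ℝ)] with x hx
      rw [mem_closedBall_zero_iff, ← ofReal_one, ← ofReal_sub, norm_real, Real.norm_eq_abs, abs_le]
      constructor <;> linarith [hx.1, hx.2]
  simpa using h0.add h1

lemma tendsto_log_mul_log_one_sub :
    Tendsto (fun x : ℝ => Real.log x * Real.log (1 - x)) (𝓝[>] 0) (𝓝 0) := by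
  have hbig : (fun x : ℝ => Real.log (1 - x)) =O[𝓝 0] fun x => x := by
    have hd : DifferentiableAt ℝ (fun x : ℝ => Real.log (1 - x)) 0 :=
      (Real.differentiableAt_log (by norm_num)).comp 0 (by fun_prop)
    simpa using hd.isBigO_sub
  refine ((isBigO_refl Real.log _).mul (hbig.mono nhdsWithin_le_nhds)).trans_tendsto ?_
  simpa [mul_comm] using (Real.continuous_mul_log.tendsto 0).mono_left nhdsWithin_le_nhds

def doubleSlitPlane : Set ℂ := slitPlane ∩ (1 - ·) ⁻¹' slitPlane

lemma mem_doubleSlitPlane_iff {z : ℂ} :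
    z ∈ doubleSlitPlane ↔ ¬(z.im = 0 ∧ (z.re ≤ 0 ∨ 1 ≤ z.re)) := by
  simp only [doubleSlitPlane, mem_inter_iff, mem_preimage, mem_slitPlane_iff, sub_re, one_re,
    sub_im, one_im]
  grind

lemma isOpen_doubleSlitPlane : IsOpen doubleSlitPlane :=
  isOpen_slitPlane.inter (isOpen_slitPlane.preimage (by fun_prop))

lemma starConvex_doubleSlitPlane : StarConvex ℝ (1 / 2 : ℂ) doubleSlitPlane := by
  have hslit : StarConvex ℝ (1 / 2 : ℂ) slitPlane :=
    starConvex_slitPlane (by norm_num [Complex.lt_def])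
  refine hslit.inter fun y hy a b ha hb hab => ?_
  have hab' : (a : ℂ) + b = 1 := by exact_mod_cast hab
  rw [mem_preimage]
  convert hslit hy ha hb hab using 1
  simp only [Complex.real_smul]
  linear_combination -hab'

lemma isPreconnected_doubleSlitPlane : IsPreconnected doubleSlitPlane :=
  (starConvex_doubleSlitPlane.isPathConnected
    (by norm_num [mem_doubleSlitPlane_iff])).isConnected.isPreconnected

lemma one_sub_mem_ball_half {w : ℂ} (hw : w ∈ ball (1 / 2 : ℂ) (1 / 2)) :
    1 - w ∈ ball (1 / 2 : ℂ) (1 / 2) := by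
  rw [mem_ball, dist_eq] at *
  rwa [← norm_neg, show -(1 - w - 1 / 2) = w - 1 / 2 by ring]

lemma ball_half_subset_slitPlane : ball (1 / 2 : ℂ) (1 / 2) ⊆ slitPlane :=
  (ball_subset_ball' (by norm_num [dist_eq])).trans ball_one_subset_slitPlane

lemma ball_half_subset_ball_one : ball (1 / 2 : ℂ) (1 / 2) ⊆ ball 0 1 :=
  ball_subset_ball' (by norm_num)

lemma ball_half_subset_doubleSlitPlane : ball (1 / 2 : ℂ) (1 / 2) ⊆ doubleSlitPlane :=
  fun _ hw =>
    ⟨ball_half_subset_slitPlane hw, ball_half_subset_slitPlane (one_sub_mem_ball_half hw)⟩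

noncomputable def dilogReflection (f : ℂ → ℂ) (w : ℂ) : ℂ :=
  f w + f (1 - w) + log w * log (1 - w)

section Reflection

variable {f : ℂ → ℂ}

lemma hasDerivAt_of_eq_dilogSeries (hf : ∀ z, ‖z‖ < 1 → f z = dilogSeries z) {z : ℂ}
    (hz : ‖z‖ < 1) (h0 : z ≠ 0) : HasDerivAt f (-log (1 - z) / z) z :=
  (hasDerivAt_dilogSeries hz h0).congr_of_eventuallyEq <|
    eventually_of_mem (isOpen_ball.mem_nhds (mem_ball_zero_iff.2 hz)) fun w hw =>
      hf w (mem_ball_zero_iff.1 hw)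

lemma hasDerivAt_dilogReflection (hf : ∀ z, ‖z‖ < 1 → f z = dilogSeries z) {w : ℂ}
    (hw : w ∈ ball (1 / 2 : ℂ) (1 / 2)) : HasDerivAt (dilogReflection f) 0 w := by
  have hw' := one_sub_mem_ball_half hw
  have hw0 := slitPlane_ne_zero (ball_half_subset_slitPlane hw)
  have hw0' := slitPlane_ne_zero (ball_half_subset_slitPlane hw')
  have hsub : HasDerivAt (fun u : ℂ => 1 - u) (-1) w := (hasDerivAt_id w).const_sub 1
  have h1 := hasDerivAt_of_eq_dilogSeries hf
    (mem_ball_zero_iff.1 (ball_half_subset_ball_one hw)) hw0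
  have h2 := (hasDerivAt_of_eq_dilogSeries hf
    (mem_ball_zero_iff.1 (ball_half_subset_ball_one hw')) hw0').comp w hsub
  have h3 := (hasDerivAt_log (ball_half_subset_slitPlane hw)).mul
    ((hasDerivAt_log (ball_half_subset_slitPlane hw')).comp w hsub)
  refine ((h1.add h2).add h3).congr_deriv ?_
  rw [Function.comp_apply, sub_sub_cancel]
  field_simp
  ring

lemma differentiableOn_dilogReflection (hd : DifferentiableOn ℂ f ((1 - ·) ⁻¹' slitPlane)) :
    DifferentiableOn ℂ (dilogReflection f) doubleSlitPlane := by
  have hfw {w : ℂ} (hw : 1 - w ∈ slitPlane) : DifferentiableAt ℂ f w :=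
    hd.differentiableAt ((isOpen_slitPlane.preimage (by fun_prop)).mem_nhds hw)
  intro w hw
  refine DifferentiableAt.differentiableWithinAt ?_
  have hsub : DifferentiableAt ℂ (fun u : ℂ => 1 - u) w := by fun_prop
  exact ((hfw hw.2).add ((hfw (by simpa using hw.1)).comp w hsub)).add
    ((differentiableAt_log hw.1).mul ((differentiableAt_log hw.2).comp w hsub))

lemma dilogReflection_eqOn_const (hf : ∀ z, ‖z‖ < 1 → f z = dilogSeries z)
    (hd : DifferentiableOn ℂ f ((1 - ·) ⁻¹' slitPlane)) :
    EqOn (dilogReflection f) (fun _ => dilogReflection f (1 / 2)) doubleSlitPlane := by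
  have hball : ∀ w ∈ ball (1 / 2 : ℂ) (1 / 2), dilogReflection f w = dilogReflection f (1 / 2) :=
    fun w hw => isOpen_ball.is_const_of_deriv_eq_zero (convex_ball _ _).isPreconnected
      (fun u hu => (hasDerivAt_dilogReflection hf hu).differentiableAt.differentiableWithinAt)
      (fun u hu => (hasDerivAt_dilogReflection hf hu).deriv) hw (mem_ball_self (by norm_num))
  exact ((differentiableOn_dilogReflection hd).analyticOnNhd isOpen_doubleSlitPlane)
    |>.eqOn_of_preconnected_of_eventuallyEq analyticOnNhd_const isPreconnected_doubleSlitPlane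
      (ball_half_subset_doubleSlitPlane (mem_ball_self (by norm_num)))
      (eventually_of_mem (ball_mem_nhds _ (by norm_num)) hball)

lemma dilogReflection_ofReal (hf : ∀ z, ‖z‖ < 1 → f z = dilogSeries z) {x : ℝ}
    (hx : x ∈ Ioo 0 1) : dilogReflection f x =
      dilogSeries x + dilogSeries (1 - x) + ↑(Real.log x * Real.log (1 - x)) := by
  have hx1 : ‖(x : ℂ)‖ < 1 := by
    rw [norm_real, Real.norm_eq_abs, abs_lt]
    constructor <;> linarith [hx.1, hx.2]
  have hx2 : ‖1 - (x : ℂ)‖ < 1 := by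
    rw [← ofReal_one, ← ofReal_sub, norm_real, Real.norm_eq_abs, abs_lt]
    constructor <;> linarith [hx.1, hx.2]
  rw [dilogReflection, hf _ hx1, hf _ hx2, ofReal_mul, ofReal_log hx.1.le,
    ofReal_log (by linarith [hx.2]), ofReal_sub, ofReal_one]

lemma dilogReflection_eqOn (hf : ∀ z, ‖z‖ < 1 → f z = dilogSeries z)
    (hd : DifferentiableOn ℂ f ((1 - ·) ⁻¹' slitPlane)) :
    EqOn (dilogReflection f) (fun _ => (Real.pi : ℂ) ^ 2 / 6) doubleSlitPlane := by
  have hlim : Tendsto (fun x : ℝ => dilogReflection f x) (𝓝[>] 0)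
      (𝓝 ((Real.pi : ℂ) ^ 2 / 6)) := by
    have h := tendsto_dilogSeries_add_dilogSeries_one_sub.add
      ((continuous_ofReal.tendsto 0).comp tendsto_log_mul_log_one_sub)
    rw [ofReal_zero, add_zero] at h
    refine h.congr' ?_
    filter_upwards [Ioo_mem_nhdsGT (zero_lt_one' ℝ)] with x hx
    exact (dilogReflection_ofReal hf hx).symm
  have hconst := dilogReflection_eqOn_const hf hd
  have hval : dilogReflection f (1 / 2) = (Real.pi : ℂ) ^ 2 / 6 := by
    refine tendsto_nhds_unique (tendsto_const_nhds.congr' ?_) hlim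
    filter_upwards [Ioo_mem_nhdsGT (zero_lt_one' ℝ)] with x hx
    refine (hconst (mem_doubleSlitPlane_iff.2 ?_)).symm
    simp only [ofReal_im, ofReal_re, true_and, not_or, not_le]
    exact hx
  intro w hw
  rw [hconst hw, hval]

end Reflection

/-- Euler's reflection identity: for `Li₂` holomorphic on the cut plane and given by
its series on the disk, `Li₂(z) + Li₂(1-z) + log(z)log(1-z)` has zero derivative on
`ℂ \ ((-∞,0] ∪ [1,∞))` and equals `π²/6` there. -/
theorem stmt18 (Li2 : ℂ → ℂ)
    (hdiff : DifferentiableOn ℂ Li2 {z : ℂ | ¬(z.im = 0 ∧ 1 ≤ z.re)})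
    (hser : ∀ z : ℂ, ‖z‖ < 1 → Li2 z = ∑' n : ℕ, z ^ (n + 1) / ((n : ℂ) + 1) ^ 2)
    (z : ℂ) (hz : ¬(z.im = 0 ∧ (z.re ≤ 0 ∨ 1 ≤ z.re))) :
    deriv (fun w => Li2 w + Li2 (1 - w) + Complex.log w * Complex.log (1 - w)) z = 0 ∧
    Li2 z + Li2 (1 - z) + Complex.log z * Complex.log (1 - z) = (Real.pi : ℂ) ^ 2 / 6 := by
  have hdiff' : DifferentiableOn ℂ Li2 ((1 - ·) ⁻¹' slitPlane) :=
    hdiff.mono fun w hw => by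
      simp only [mem_preimage, mem_slitPlane_iff, sub_re, one_re, sub_im, one_im] at hw
      grind
  have hvalue := dilogReflection_eqOn hser hdiff'
  have hz' : z ∈ doubleSlitPlane := mem_doubleSlitPlane_iff.2 hz
  refine ⟨?_, hvalue hz'⟩
  have hlocal : dilogReflection Li2 =ᶠ[𝓝 z] fun _ => (Real.pi : ℂ) ^ 2 / 6 :=
    eventually_of_mem (isOpen_doubleSlitPlane.mem_nhds hz') hvalue
  exact hlocal.deriv_eq.trans (deriv_const z _)
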